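/- arXiv:2302.01535 — 2 statements merged into one kernel-verified Lean document; each statement's English description precedes it below -/
import Mathlib

section
/- Primal-dual witness optimality of the SDP solution: Let M be a real symmetric d×d matrix, ρ ≥ 0, J ⊆ [d] with |J| = s ≥ 1, and ẑ ∈ {−1, +1}^s. Let x̂ be a unit leading eigenvector of M_{J,J} − ρ ẑẑᵀ. Suppose (i) x̂_i ≠ 0 for every i ∈ J and either ẑ_i = sign(x̂_i) for all i ∈ J or ẑ_i = −sign(x̂_i) for all i ∈ J; (ii) there exists a (d−s)×s matrix Ẑ_{J^c,J} with all entries of absolute value < 1 such that (M_{J^c,J} − ρ Ẑ_{J^c,J}) x̂ = 0; and (iii) there exists a symmetric (d−s)×(d−s) matrix Ẑ_{J^c,J^c} with all entries of absolute value < 1 such that λ₁(M_{J,J} − ρ ẑẑᵀ) = λ₁(M − ρ Ẑ), where Ẑ is the symmetric d×d matrix with J×J block ẑẑᵀ, J^c×J block Ẑ_{J^c,J}, and J^c×J^c block Ẑ_{J^c,J^c}. Then the d×d matrix X̂ whose J×J block is x̂ x̂ᵀ and whose other entries are zero is an optimal solution of the SDP max{⟨M, X⟩ − ρ‖X‖_{1,1}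 : X ⪰ 0, tr(X) = 1}, and supp(diag(X̂)) = J. -/
open Matrix MeasureTheory ProbabilityTheory

noncomputable section

/-- Spectral norm (largest singular value) of a rectangular real matrix. -/
noncomputable def specNorm {m n : Type*} [Fintype m] [Fintype n] [DecidableEq n]
    (A : Matrix m n ℝ) : ℝ :=
  ‖LinearMap.toContinuousLinearMap (Matrix.toEuclideanLin A)‖

/-- Eigenvalues of a square real matrix, sorted in ascending order
(empty list if the matrix is not symmetric). -/
noncomputable def eigsAsc {ι : Type*} [Fintype ι] [DecidableEq ι]
    (A : Matrix ι ι ℝ) : List ℝ :=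
  if hA : A.IsHermitian then (Finset.univ.val.map hA.eigenvalues).sort (· ≤ ·) else []

/-- `k`-th largest eigenvalue (1-indexed) of a real symmetric matrix. -/
noncomputable def lamK {ι : Type*} [Fintype ι] [DecidableEq ι]
    (k : ℕ) (A : Matrix ι ι ℝ) : ℝ :=
  (eigsAsc A).getD (Fintype.card ι - k) 0

/-- `k`-th smallest eigenvalue (1-indexed) of a real symmetric matrix. -/
noncomputable def muK {ι : Type*} [Fintype ι] [DecidableEq ι]
    (k : ℕ) (A : Matrix ι ι ℝ) : ℝ :=
  (eigsAsc A).getD (k - 1) 0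

/-- `A` is the adjacency matrix of an undirected graph (loops allowed):
symmetric with entries in `{0,1}`. -/
def IsAdj {ι : Type*} (A : Matrix ι ι ℝ) : Prop :=
  A.IsSymm ∧ ∀ i j, A i j = 0 ∨ A i j = 1

/-- Degree of node `i`. -/
def deg {ι : Type*} [Fintype ι] (A : Matrix ι ι ℝ) (i : ι) : ℝ := ∑ j, A i j

/-- Maximum node degree. -/
noncomputable def maxDeg {ι : Type*} [Fintype ι] (A : Matrix ι ι ℝ) : ℝ := ⨆ i, deg A i

/-- Minimum node degree. -/
noncomputable def minDeg {ι : Type*} [Fintype ι] (A : Matrix ι ι ℝ) : ℝ := ⨅ i, deg A i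

/-- Graph Laplacian `D - A`. -/
noncomputable def lap {ι : Type*} [Fintype ι] [DecidableEq ι]
    (A : Matrix ι ι ℝ) : Matrix ι ι ℝ :=
  Matrix.diagonal (deg A) - A

/-- Algebraic connectivity: second-smallest Laplacian eigenvalue. -/
noncomputable def algConn {ι : Type*} [Fintype ι] [DecidableEq ι]
    (A : Matrix ι ι ℝ) : ℝ :=
  muK 2 (lap A)

/-- Adjacency matrix of the complement graph (with loops): `𝟙𝟙ᵀ - A`. -/
def graphCompl {ι : Type*} (A : Matrix ι ι ℝ) : Matrix ι ι ℝ :=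
  Matrix.of fun i j => 1 - A i j

/-- Irregularity `ψ(G) = max{Δmax(G) − φ(G), Δmax(Ḡ) − φ(Ḡ)}`. -/
noncomputable def irreg {ι : Type*} [Fintype ι] [DecidableEq ι]
    (A : Matrix ι ι ℝ) : ℝ :=
  max (maxDeg A - algConn A) (maxDeg (graphCompl A) - algConn (graphCompl A))

end
noncomputable section SDP

variable {d : ℕ}

/-- The `J×J` submatrix of `M`. -/
def subJJ (M : Matrix (Fin d) (Fin d) ℝ) (J : Finset (Fin d)) :
    Matrix {i : Fin d // i ∈ J} {i : Fin d // i ∈ J} ℝ :=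
  Matrix.of fun i j => M i.1 j.1

/-- The `J^c×J` submatrix of `M`. -/
def subCJ (M : Matrix (Fin d) (Fin d) ℝ) (J : Finset (Fin d)) :
    Matrix {i : Fin d // i ∉ J} {i : Fin d // i ∈ J} ℝ :=
  Matrix.of fun i j => M i.1 j.1

/-- The `J×J^c` submatrix of `M`. -/
def subJC (M : Matrix (Fin d) (Fin d) ℝ) (J : Finset (Fin d)) :
    Matrix {i : Fin d // i ∈ J} {i : Fin d // i ∉ J} ℝ :=
  Matrix.of fun i j => M i.1 j.1

/-- The `J^c×J^c` submatrix of `M`. -/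
def subCC (M : Matrix (Fin d) (Fin d) ℝ) (J : Finset (Fin d)) :
    Matrix {i : Fin d // i ∉ J} {i : Fin d // i ∉ J} ℝ :=
  Matrix.of fun i j => M i.1 j.1

/-- Assemble a symmetric `d×d` matrix from a `J×J` block, a `J^c×J` block (also used,
transposed, as the `J×J^c` block) and a `J^c×J^c` block. -/
def assembleZ (J : Finset (Fin d))
    (zJJ : Matrix {i : Fin d // i ∈ J} {i : Fin d // i ∈ J} ℝ)
    (zCJ : Matrix {i : Fin d // i ∉ J} {i : Fin d // i ∈ J} ℝ)
    (zCC : Matrix {i : Fin d // i ∉ J} {i : Fin d // i ∉ J} ℝ) :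
    Matrix (Fin d) (Fin d) ℝ :=
  Matrix.of fun i j =>
    if hi : i ∈ J then
      if hj : j ∈ J then zJJ ⟨i, hi⟩ ⟨j, hj⟩ else zCJ ⟨j, hj⟩ ⟨i, hi⟩
    else
      if hj : j ∈ J then zCJ ⟨i, hi⟩ ⟨j, hj⟩ else zCC ⟨i, hi⟩ ⟨j, hj⟩

/-- Embed a `J×J` matrix into a `d×d` matrix, filling the other entries with zeros. -/
def embedJ (J : Finset (Fin d))
    (X : Matrix {i : Fin d // i ∈ J} {i : Fin d // i ∈ J} ℝ) :
    Matrix (Fin d) (Fin d) ℝ :=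
  Matrix.of fun i j =>
    if hi : i ∈ J then (if hj : j ∈ J then X ⟨i, hi⟩ ⟨j, hj⟩ else 0) else 0

/-- Objective of the SDP: `⟨M, X⟩ − ρ‖X‖₁,₁`. -/
noncomputable def sdpObj (M : Matrix (Fin d) (Fin d) ℝ) (ρ : ℝ)
    (X : Matrix (Fin d) (Fin d) ℝ) : ℝ :=
  (Mᵀ * X).trace - ρ * ∑ i, ∑ j, |X i j|

/-- Maximum node degree of the bipartite graph whose biadjacency matrix is `B`. -/
noncomputable def bipMaxDeg {ι κ : Type*} [Fintype ι] [Fintype κ] (B : Matrix ι κ ℝ) : ℝ :=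
  max (⨆ i, ∑ j, B i j) (⨆ j, ∑ i, B i j)

/-- `‖B‖_max = max_{i,j} |B_{i,j}|`. -/
noncomputable def matMaxAbs {ι κ : Type*} [Fintype ι] [Fintype κ] (B : Matrix ι κ ℝ) : ℝ :=
  ⨆ i, ⨆ j, |B i j|

end SDP

/-!
Weak duality: for every symmetric `Z` with entries in `[-1, 1]` and every feasible `X`,
`⟨M, X⟩ - ρ‖X‖₁,₁ ≤ ⟨M - ρZ, X⟩ ≤ λ₁(M - ρZ)`, the last step because `X ⪰ 0` and `tr X = 1`.
For the dual witness `Ẑ` this bound is `λ₁(M_{J,J} - ρẑẑᵀ)`, and the candidate `X̂` attains it: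
its objective is `x̂ᵀM_{J,J}x̂ - ρ(∑ᵢ|x̂ᵢ|)²`, the sign alignment turns `(∑ᵢ|x̂ᵢ|)²` into `(ẑᵀx̂)²`,
so the objective is the Rayleigh quotient of the unit leading eigenvector `x̂`.
-/

open Matrix

section Spectral

variable {ι : Type*} [Fintype ι]

/-- Schur product theorem: for symmetric `X`, `tr (C * X) = 𝟙ᵀ (C ⊙ X) 𝟙`. -/
theorem Matrix.PosSemidef.trace_mul_nonneg {C X : Matrix ι ι ℝ} (hC : C.PosSemidef)
    (hX : X.PosSemidef) : 0 ≤ (C * X).trace := by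
  refine (show (0 : ℝ) ≤ _ from (hC.hadamard hX).dotProduct_mulVec_nonneg (fun _ => 1)).trans_eq ?_
  simp only [trace, diag_apply, mul_apply, dotProduct, mulVec, hadamard_apply, star_trivial,
    one_mul, mul_one]
  exact Finset.sum_congr rfl fun i _ => Finset.sum_congr rfl fun j _ => by
    rw [← hX.isHermitian.apply j i, star_trivial]

variable [DecidableEq ι]

theorem Matrix.IsHermitian.posSemidef_smul_one_sub {A : Matrix ι ι ℝ} (hA : A.IsHermitian)
    {t : ℝ} (ht : ∀ k, hA.eigenvalues k ≤ t) : (t • (1 : Matrix ι ι ℝ) - A).PosSemidef := by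
  have hH : (t • (1 : Matrix ι ι ℝ) - A).IsHermitian :=
    (isHermitian_one.smul (IsSelfAdjoint.all t)).sub hA
  rw [posSemidef_iff_isHermitian_and_spectrum_nonneg, ← Algebra.algebraMap_eq_smul_one,
    ← spectrum.singleton_sub_eq, hA.spectrum_real_eq_range_eigenvalues]
  refine ⟨by rwa [Algebra.algebraMap_eq_smul_one], ?_⟩
  rintro _ ⟨_, rfl, _, ⟨k, rfl⟩, rfl⟩
  exact sub_nonneg.mpr (ht k)

theorem eigenvalues_le_lamK_one {A : Matrix ι ι ℝ} (hA : A.IsHermitian) (k : ι) :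
    hA.eigenvalues k ≤ lamK 1 A := by
  have : Nonempty ι := ⟨k⟩
  rw [lamK, eigsAsc, dif_pos hA]
  set l := (Finset.univ.val.map hA.eigenvalues).sort (· ≤ ·)
  have hlen : l.length = Fintype.card ι := by simp [l]
  have hidx : Fintype.card ι - 1 < l.length := by
    have := Fintype.card_pos (α := ι); omega
  obtain ⟨i, hi⟩ := List.mem_iff_get.mp (show hA.eigenvalues k ∈ l by simp [l])
  rw [List.getD_eq_getElem _ _ hidx, ← hi]
  exact (Multiset.pairwise_sort _ _).rel_get_of_le (Fin.mk_le_mk.mpr (by omega))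

theorem trace_mul_le_lamK_one_mul_trace {A X : Matrix ι ι ℝ} (hA : A.IsHermitian)
    (hX : X.PosSemidef) : (A * X).trace ≤ lamK 1 A * X.trace := by
  have h := (hA.posSemidef_smul_one_sub (eigenvalues_le_lamK_one hA)).trace_mul_nonneg hX
  rw [Matrix.sub_mul, trace_sub, smul_mul, one_mul, trace_smul, smul_eq_mul] at h
  linarith

end Spectral

section WeakDuality

theorem trace_transpose_mul_eq_sum {m n R : Type*} [Fintype m] [Fintype n]
    [NonUnitalNonAssocSemiring R] (B Y : Matrix m n R) :
    (Bᵀ * Y).trace = ∑ i, ∑ j, B i j * Y i j := by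
  simp only [trace, diag_apply, mul_apply, transpose_apply]
  exact Finset.sum_comm

theorem trace_transpose_mul_le_sum_abs {m n : Type*} [Fintype m] [Fintype n]
    {Z : Matrix m n ℝ} (hZ : ∀ i j, |Z i j| ≤ 1) (X : Matrix m n ℝ) :
    (Zᵀ * X).trace ≤ ∑ i, ∑ j, |X i j| := by
  rw [trace_transpose_mul_eq_sum]
  gcongr with i _ j _
  calc Z i j * X i j ≤ |Z i j| * |X i j| := by rw [← abs_mul]; exact le_abs_self _
    _ ≤ |X i j| := mul_le_of_le_one_left (abs_nonneg _) (hZ i j)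

theorem sdpObj_le_lamK_one {d : ℕ} {M Z X : Matrix (Fin d) (Fin d) ℝ} {ρ : ℝ} (hρ : 0 ≤ ρ)
    (hZ : ∀ i j, |Z i j| ≤ 1) (hA : (M - ρ • Z).IsSymm) (hX : X.PosSemidef)
    (htr : X.trace = 1) : sdpObj M ρ X ≤ lamK 1 (M - ρ • Z) := by
  have hdual : sdpObj M ρ X ≤ ((M - ρ • Z)ᵀ * X).trace := by
    rw [sdpObj, transpose_sub, transpose_smul, Matrix.sub_mul, trace_sub, smul_mul, trace_smul,
      smul_eq_mul]
    exact sub_le_sub_left (mul_le_mul_of_nonneg_left (trace_transpose_mul_le_sum_abs hZ X) hρ) _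
  calc sdpObj M ρ X ≤ ((M - ρ • Z)ᵀ * X).trace := hdual
    _ = ((M - ρ • Z) * X).trace := by rw [hA.eq]
    _ ≤ lamK 1 (M - ρ • Z) * X.trace :=
      trace_mul_le_lamK_one_mul_trace (isHermitian_iff_isSymm.mpr hA) hX
    _ = lamK 1 (M - ρ • Z) := by rw [htr, mul_one]

end WeakDuality

theorem Finset.sum_dite_mem_eq_sum_subtype {α R : Type*} [Fintype α] [DecidableEq α]
    [AddCommMonoid R] (s : Finset α) (g : s → R) :
    ∑ i, (if h : i ∈ s then g ⟨i, h⟩ else 0) = ∑ i, g i := by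
  rw [← Finset.sum_attach_eq_sum_dite, Finset.univ_eq_attach]

section Embedding

variable {d : ℕ} {J : Finset (Fin d)}

theorem sum_sum_embedJ (Y : Matrix {i // i ∈ J} {i // i ∈ J} ℝ) (F : Fin d → Fin d → ℝ → ℝ)
    (hF : ∀ i j, F i j 0 = 0) :
    ∑ i, ∑ j, F i j (embedJ J Y i j) = ∑ i : {i // i ∈ J}, ∑ j : {i // i ∈ J}, F i j (Y i j) := by
  rw [← J.sum_dite_mem_eq_sum_subtype]
  refine Finset.sum_congr rfl fun i _ => ?_
  split_ifs with hi
  · rw [← J.sum_dite_mem_eq_sum_subtype]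
    refine Finset.sum_congr rfl fun j _ => ?_
    split_ifs with hj <;> simp [embedJ, hi, hj, hF]
  · simp [embedJ, hi, hF]

theorem trace_embedJ (Y : Matrix {i // i ∈ J} {i // i ∈ J} ℝ) :
    (embedJ J Y).trace = Y.trace := by
  rw [trace, trace, ← J.sum_dite_mem_eq_sum_subtype]
  refine Finset.sum_congr rfl fun i _ => ?_
  by_cases hi : i ∈ J <;> simp [embedJ, hi]

theorem embedJ_apply_self_ne_zero_iff {Y : Matrix {i // i ∈ J} {i // i ∈ J} ℝ}
    (hY : ∀ i, Y i i ≠ 0) (i : Fin d) : embedJ J Y i i ≠ 0 ↔ i ∈ J := by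
  by_cases hi : i ∈ J <;> simp [embedJ, hi, hY]

theorem Matrix.PosSemidef.embedJ {Y : Matrix {i // i ∈ J} {i // i ∈ J} ℝ} (hY : Y.PosSemidef) :
    (embedJ J Y).PosSemidef := by
  rw [posSemidef_iff_dotProduct_mulVec] at hY ⊢
  refine ⟨?_, fun v => ?_⟩
  · ext i j
    simp only [conjTranspose_apply, star_trivial, _root_.embedJ, of_apply]
    split_ifs <;> first | rfl | simpa using hY.1.apply _ _
  · convert hY.2 (fun i => v i) using 1
    simp only [star_trivial, dotProduct, mulVec, Finset.mul_sum]
    exact sum_sum_embedJ Y (fun i j t => v i * (t * v j)) (by simp)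

end Embedding

theorem Real.sign_mul_self_eq_abs (r : ℝ) : Real.sign r * r = |r| := by
  rcases lt_trichotomy r 0 with hr | rfl | hr
  · rw [Real.sign_of_neg hr, abs_of_neg hr, neg_one_mul]
  · simp
  · rw [Real.sign_of_pos hr, abs_of_pos hr, one_mul]

theorem sq_dotProduct_eq_sq_sum_abs {ι : Type*} [Fintype ι] {z x : ι → ℝ}
    (h : (∀ i, z i = Real.sign (x i)) ∨ (∀ i, z i = -Real.sign (x i))) :
    (z ⬝ᵥ x) ^ 2 = (∑ i, |x i|) ^ 2 := by
  rcases h with h | h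
  · simp only [dotProduct, h, Real.sign_mul_self_eq_abs]
  · simp only [dotProduct, h, neg_mul, Finset.sum_neg_distrib, neg_sq,
      Real.sign_mul_self_eq_abs]

section Witness

variable {d : ℕ} {J : Finset (Fin d)}

theorem assembleZ_isSymm {zJJ : Matrix {i // i ∈ J} {i // i ∈ J} ℝ}
    {zCJ : Matrix {i // i ∉ J} {i // i ∈ J} ℝ} {zCC : Matrix {i // i ∉ J} {i // i ∉ J} ℝ}
    (hJJ : zJJ.IsSymm) (hCC : zCC.IsSymm) : (assembleZ J zJJ zCJ zCC).IsSymm := by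
  ext i j
  simp only [transpose_apply, assembleZ, of_apply]
  split_ifs
  exacts [hJJ.apply _ _, rfl, rfl, hCC.apply _ _]

theorem abs_assembleZ_le {zJJ : Matrix {i // i ∈ J} {i // i ∈ J} ℝ}
    {zCJ : Matrix {i // i ∉ J} {i // i ∈ J} ℝ} {zCC : Matrix {i // i ∉ J} {i // i ∉ J} ℝ} {c : ℝ}
    (hJJ : ∀ i j, |zJJ i j| ≤ c) (hCJ : ∀ i j, |zCJ i j| ≤ c) (hCC : ∀ i j, |zCC i j| ≤ c)
    (i j : Fin d) : |assembleZ J zJJ zCJ zCC i j| ≤ c := by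
  simp only [assembleZ, of_apply]
  split_ifs
  exacts [hJJ _ _, hCJ _ _, hCJ _ _, hCC _ _]

theorem sdpObj_embedJ_vecMulVec (M : Matrix (Fin d) (Fin d) ℝ) (ρ : ℝ)
    (x : {i // i ∈ J} → ℝ) :
    sdpObj M ρ (embedJ J (vecMulVec x x)) = x ⬝ᵥ (subJJ M J *ᵥ x) - ρ * (∑ i, |x i|) ^ 2 := by
  rw [sdpObj, trace_transpose_mul_eq_sum, sum_sum_embedJ _ (fun i j t => M i j * t) (by simp),
    sum_sum_embedJ _ (fun _ _ t => |t|) (by simp), sq, Finset.sum_mul_sum]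
  simp only [dotProduct, mulVec, subJJ, of_apply, vecMulVec_apply, abs_mul, Finset.mul_sum]
  congr 1
  exact Finset.sum_congr rfl fun i _ => Finset.sum_congr rfl fun j _ => by ring

theorem sdpObj_embedJ_vecMulVec_of_mulVec_eq {M : Matrix (Fin d) (Fin d) ℝ} {ρ μ : ℝ}
    {z x : {i // i ∈ J} → ℝ}
    (hsign : (∀ i, z i = Real.sign (x i)) ∨ (∀ i, z i = -Real.sign (x i)))
    (hxunit : ∑ i, x i ^ 2 = 1) (hxeig : (subJJ M J - ρ • vecMulVec z z) *ᵥ x = μ • x) :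
    sdpObj M ρ (embedJ J (vecMulVec x x)) = μ := by
  have hquad : x ⬝ᵥ ((subJJ M J - ρ • vecMulVec z z) *ᵥ x)
      = x ⬝ᵥ (subJJ M J *ᵥ x) - ρ * (z ⬝ᵥ x) ^ 2 := by
    rw [sub_mulVec, smul_mulVec, vecMulVec_mulVec, op_smul_eq_smul, dotProduct_sub,
      dotProduct_smul, dotProduct_smul, dotProduct_comm x z, smul_eq_mul, smul_eq_mul, sq]
  have hxx : x ⬝ᵥ x = 1 := by simpa only [dotProduct, sq] using hxunit
  rw [sdpObj_embedJ_vecMulVec, ← sq_dotProduct_eq_sq_sum_abs hsign, ← hquad, hxeig,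
    dotProduct_smul, hxx, smul_eq_mul, mul_one]

end Witness

theorem sdp_primal_dual_witness_optimality_general
    (d : ℕ) (M : Matrix (Fin d) (Fin d) ℝ) (hM : M.IsSymm)
    (ρ : ℝ) (hρ : 0 ≤ ρ)
    (J : Finset (Fin d))
    (z : {i : Fin d // i ∈ J} → ℝ) (hz : ∀ i, z i = 1 ∨ z i = -1)
    (x : {i : Fin d // i ∈ J} → ℝ) (hxunit : ∑ i, x i ^ 2 = 1)
    (hxeig : (subJJ M J - ρ • Matrix.vecMulVec z z).mulVec x
      = lamK 1 (subJJ M J - ρ • Matrix.vecMulVec z z) • x)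
    (hx0 : ∀ i, x i ≠ 0)
    (hsign : (∀ i, z i = Real.sign (x i)) ∨ (∀ i, z i = -Real.sign (x i)))
    (ZCJ : Matrix {i : Fin d // i ∉ J} {i : Fin d // i ∈ J} ℝ)
    (hZCJ : ∀ i j, |ZCJ i j| < 1)
    (ZCC : Matrix {i : Fin d // i ∉ J} {i : Fin d // i ∉ J} ℝ)
    (hZCCsymm : ZCC.IsSymm) (hZCC : ∀ i j, |ZCC i j| < 1)
    (hlam : lamK 1 (subJJ M J - ρ • Matrix.vecMulVec z z)
      = lamK 1 (M - ρ • assembleZ J (Matrix.vecMulVec z z) ZCJ ZCC)) :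
    (embedJ J (Matrix.vecMulVec x x)).PosSemidef ∧
    (embedJ J (Matrix.vecMulVec x x)).trace = 1 ∧
    (∀ X : Matrix (Fin d) (Fin d) ℝ, X.PosSemidef → X.trace = 1 →
      sdpObj M ρ X ≤ sdpObj M ρ (embedJ J (Matrix.vecMulVec x x))) ∧
    (∀ i : Fin d, (embedJ J (Matrix.vecMulVec x x)) i i ≠ 0 ↔ i ∈ J) := by
  set Z := assembleZ J (vecMulVec z z) ZCJ ZCC
  have hzz : ∀ i j, |vecMulVec z z i j| ≤ 1 := fun i j => by
    rcases hz i with hi | hi <;> rcases hz j with hj | hj <;> simp [vecMulVec_apply, hi, hj]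
  have hZ : ∀ i j, |Z i j| ≤ 1 :=
    abs_assembleZ_le hzz (fun i j => (hZCJ i j).le) (fun i j => (hZCC i j).le)
  have hA : (M - ρ • Z).IsSymm :=
    hM.sub ((assembleZ_isSymm (transpose_vecMulVec z z) hZCCsymm).smul ρ)
  refine ⟨(posSemidef_vecMulVec_self_star x).embedJ, ?_, fun X hX htr => ?_,
    embedJ_apply_self_ne_zero_iff fun i => mul_ne_zero (hx0 i) (hx0 i)⟩
  · rw [trace_embedJ, trace_vecMulVec]
    simpa only [dotProduct, sq] using hxunit
  · rw [sdpObj_embedJ_vecMulVec_of_mulVec_eq hsign hxunit hxeig, hlam]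
    exact sdpObj_le_lamK_one hρ hZ hA hX htr

/-- Primal-dual witness optimality of the SDP solution: under the witness conditions,
the matrix with `J×J` block `x̂ x̂ᵀ` and zeros elsewhere is an optimal solution of
`max{⟨M, X⟩ − ρ‖X‖₁,₁ : X ⪰ 0, tr X = 1}` and its diagonal support is `J`. -/
theorem sdp_primal_dual_witness_optimality
    (d : ℕ) (M : Matrix (Fin d) (Fin d) ℝ) (hM : M.IsSymm)
    (ρ : ℝ) (hρ : 0 ≤ ρ)
    (J : Finset (Fin d)) (hcard : 1 ≤ J.card)
    (z : {i : Fin d // i ∈ J} → ℝ) (hz : ∀ i, z i = 1 ∨ z i = -1)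
    (x : {i : Fin d // i ∈ J} → ℝ) (hxunit : ∑ i, x i ^ 2 = 1)
    (hxeig : (subJJ M J - ρ • Matrix.vecMulVec z z).mulVec x
      = lamK 1 (subJJ M J - ρ • Matrix.vecMulVec z z) • x)
    (hx0 : ∀ i, x i ≠ 0)
    (hsign : (∀ i, z i = Real.sign (x i)) ∨ (∀ i, z i = -Real.sign (x i)))
    (ZCJ : Matrix {i : Fin d // i ∉ J} {i : Fin d // i ∈ J} ℝ)
    (hZCJ : ∀ i j, |ZCJ i j| < 1)
    (hwit : (subCJ M J - ρ • ZCJ).mulVec x = 0)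
    (ZCC : Matrix {i : Fin d // i ∉ J} {i : Fin d // i ∉ J} ℝ)
    (hZCCsymm : ZCC.IsSymm) (hZCC : ∀ i j, |ZCC i j| < 1)
    (hlam : lamK 1 (subJJ M J - ρ • Matrix.vecMulVec z z)
      = lamK 1 (M - ρ • assembleZ J (Matrix.vecMulVec z z) ZCJ ZCC)) :
    (embedJ J (Matrix.vecMulVec x x)).PosSemidef ∧
    (embedJ J (Matrix.vecMulVec x x)).trace = 1 ∧
    (∀ X : Matrix (Fin d) (Fin d) ℝ, X.PosSemidef → X.trace = 1 →
      sdpObj M ρ X ≤ sdpObj M ρ (embedJ J (Matrix.vecMulVec x x))) ∧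
    (∀ i : Fin d, (embedJ J (Matrix.vecMulVec x x)) i i ≠ 0 ↔ i ∈ J) :=
  sdp_primal_dual_witness_optimality_general d M hM ρ hρ J z hz x hxunit hxeig hx0 hsign ZCJ hZCJ
    ZCC hZCCsymm hZCC hlam
end

section
/- Hadamard-product quadratic form upper bound via the complement graph: Let G be an undirected graph on n vertices with adjacency matrix A_G and algebraic connectivity φ(G) > 0, and let Ḡ be its complement (adjacency matrix 𝟙𝟙ᵀ − A_G), with maximum degree Δmax(Ḡ) and algebraic connectivity φ(Ḡ). Then for all vectors y, v ∈ ℝ^n, (yᵀv)² − (n/φ(G))·(y∘v)ᵀ A_G (y∘v) ≤ ((φ(G) − (n − φ(Ḡ)))/φ(G))·(yᵀv)² + (n(Δmax(Ḡ) − φ(Ḡ))/φ(G))·‖y∘v‖₂², where y∘v denotes the entrywise product. -/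
open Matrix MeasureTheory ProbabilityTheory

noncomputable section

/-!
Write `w = y ∘ v`, `s = ∑ wᵢ`, and `L̄` for the Laplacian of the complement `Ḡ`. Since `L̄ 𝟙 = 0`,
centring `w` against `𝟙` does not change `wᵀ L̄ w`, and Courant–Fischer for the second-smallest
eigenvalue of the positive semidefinite `L̄` gives `φ(Ḡ) (n ‖w‖² − s²) ≤ n wᵀ L̄ w`. On the other
hand `wᵀ Ā w = s² − wᵀ A w`, so `wᵀ L̄ w ≤ Δmax(Ḡ) ‖w‖² − s² + wᵀ A w`. Combining the two and
dividing by `φ(G) > 0` gives the claim.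
-/

open Finset

lemma List.countP_lt_getD_one_le_one {α : Type*} [LinearOrder α] {l : List α}
    (hl : l.Pairwise (· ≤ ·)) (d : α) :
    l.countP (· < l.getD 1 d) ≤ 1 := by
  match l, hl with
  | [], _ => simp
  | [_], _ => exact (List.countP_le_length).trans (by simp)
  | _ :: b :: t, hl =>
    have hb : ∀ x ∈ b :: t, ¬ x < b := fun x hx =>
      not_lt.2 <| (List.mem_cons.1 hx).elim (fun h => h.ge) fun hx =>
        (List.pairwise_cons.1 (List.pairwise_cons.1 hl).2).1 x hx
    have : (b :: t).countP (· < b) = 0 := List.countP_eq_zero.2 (by simpa using hb)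
    simp only [List.getD_cons_succ, List.getD_cons_zero, List.countP_cons, this]
    split <;> simp

variable {ι : Type*}

lemma graphCompl_isSymm {A : Matrix ι ι ℝ} (hA : A.IsSymm) : (graphCompl A).IsSymm :=
  IsSymm.ext fun i j => by simp [graphCompl, hA.apply]

variable [Fintype ι]

lemma dotProduct_graphCompl_mulVec (A : Matrix ι ι ℝ) (x : ι → ℝ) :
    x ⬝ᵥ graphCompl A *ᵥ x = (∑ i, x i) ^ 2 - x ⬝ᵥ A *ᵥ x := by
  simp only [dotProduct, mulVec, graphCompl, of_apply, sq, sum_mul, mul_sum, ← sum_sub_distrib]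
  exact sum_congr rfl fun i _ => sum_congr rfl fun j _ => by ring

lemma sum_deg_mul_sq_le_maxDeg_mul (A : Matrix ι ι ℝ) (x : ι → ℝ) :
    ∑ i, deg A i * x i ^ 2 ≤ maxDeg A * ∑ i, x i ^ 2 := by
  rw [mul_sum]
  exact sum_le_sum fun i _ => mul_le_mul_of_nonneg_right
    (le_ciSup (Set.finite_range _).bddAbove i) (sq_nonneg _)

lemma Matrix.IsSymm.dotProduct_mulVec_sub_smul {L : Matrix ι ι ℝ} (hL : L.IsSymm) {u : ι → ℝ}
    (hu : L *ᵥ u = 0) (w : ι → ℝ) (c : ℝ) :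
    (w - c • u) ⬝ᵥ L *ᵥ (w - c • u) = w ⬝ᵥ L *ᵥ w := by
  have hsymm : u ⬝ᵥ L *ᵥ w = 0 := by
    rw [dotProduct_mulVec, ← mulVec_transpose, hL.eq, hu, zero_dotProduct]
  rw [mulVec_sub, mulVec_smul, hu, smul_zero, sub_zero, sub_dotProduct, smul_dotProduct, hsymm,
    smul_zero, sub_zero]

lemma card_mul_dotProduct_self_sub_mean (w : ι → ℝ) :
    Fintype.card ι * ((w - ((∑ i, w i) / Fintype.card ι) • 1) ⬝ᵥ
      (w - ((∑ i, w i) / Fintype.card ι) • 1)) =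
      Fintype.card ι * ∑ i, w i ^ 2 - (∑ i, w i) ^ 2 := by
  rcases isEmpty_or_nonempty ι with _ | _
  · simp
  have hn : (Fintype.card ι : ℝ) ≠ 0 := by positivity
  simp only [dotProduct, Pi.sub_apply, Pi.smul_apply, Pi.one_apply, smul_eq_mul, mul_one]
  simp only [sub_mul, mul_sub, sum_sub_distrib, ← sum_mul, ← mul_sum, sum_const, card_univ,
    nsmul_eq_mul]
  field_simp
  ring

variable [DecidableEq ι]

lemma eigsAsc_of_isHermitian {L : Matrix ι ι ℝ} (hL : L.IsHermitian) :
    eigsAsc L = (univ.val.map hL.eigenvalues).sort (· ≤ ·) :=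
  dif_pos hL

lemma card_eigenvalues_lt_muK_two_le_one {L : Matrix ι ι ℝ} (hL : L.IsHermitian) :
    #{k | hL.eigenvalues k < muK 2 L} ≤ 1 := by
  have hcount : #{k | hL.eigenvalues k < muK 2 L}
      = (eigsAsc L).countP (· < (eigsAsc L).getD 1 0) := by
    rw [← Multiset.coe_countP, eigsAsc_of_isHermitian hL, Multiset.sort_eq,
      Multiset.countP_map, muK, eigsAsc_of_isHermitian hL]
    rfl
  rw [hcount]
  exact List.countP_lt_getD_one_le_one (eigsAsc_of_isHermitian hL ▸ Multiset.pairwise_sort _ _) 0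

namespace Matrix.IsHermitian

variable {L : Matrix ι ι ℝ} (hL : L.IsHermitian)

lemma muK_two_le_eigenvalues_of_ne {k₀ k : ι} (hk₀ : hL.eigenvalues k₀ < muK 2 L) (hk : k ≠ k₀) :
    muK 2 L ≤ hL.eigenvalues k := by
  by_contra! hlt
  have hsub : ({k, k₀} : Finset ι) ⊆ ({j | hL.eigenvalues j < muK 2 L} : Finset ι) := by
    simp [insert_subset_iff, hlt, hk₀]
  have := (card_le_card hsub).trans (card_eigenvalues_lt_muK_two_le_one hL)
  rw [card_pair hk] at this
  omega

lemma dotProduct_eq_sum_eigenvectorBasis (x y : ι → ℝ) :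
    x ⬝ᵥ y = ∑ k, (hL.eigenvectorBasis k ⬝ᵥ x) * (hL.eigenvectorBasis k ⬝ᵥ y) := by
  have := hL.eigenvectorBasis.sum_inner_mul_inner (WithLp.toLp 2 x) (WithLp.toLp 2 y)
  simp only [EuclideanSpace.inner_eq_star_dotProduct, star_trivial] at this
  rw [dotProduct_comm x y, ← this]
  exact sum_congr rfl fun k _ => by rw [dotProduct_comm y, mul_comm]

lemma eigenvectorBasis_dotProduct_mulVec (k : ι) (y : ι → ℝ) :
    hL.eigenvectorBasis k ⬝ᵥ L *ᵥ y = hL.eigenvalues k * (hL.eigenvectorBasis k ⬝ᵥ y) := by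
  rw [dotProduct_mulVec, ← mulVec_transpose, (isHermitian_iff_isSymm.1 hL).eq,
    hL.mulVec_eigenvectorBasis, smul_dotProduct, smul_eq_mul]

lemma dotProduct_mulVec_eq_sum_eigenvalues (x y : ι → ℝ) :
    x ⬝ᵥ L *ᵥ y = ∑ k, hL.eigenvalues k *
      ((hL.eigenvectorBasis k ⬝ᵥ x) * (hL.eigenvectorBasis k ⬝ᵥ y)) := by
  rw [hL.dotProduct_eq_sum_eigenvectorBasis]
  exact sum_congr rfl fun k _ => by rw [hL.eigenvectorBasis_dotProduct_mulVec]; ring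

end Matrix.IsHermitian

namespace Matrix.PosSemidef

variable {L : Matrix ι ι ℝ} {u : ι → ℝ}

/-- If an eigenvector `b k₀` has eigenvalue below `μ₂`, every other eigenvalue is positive, so the
kernel vector `u` is a multiple of `b k₀`; hence `x ⊥ u` forces `x ⊥ b k₀`. -/
lemma eigenvectorBasis_dotProduct_eq_zero (hL : L.PosSemidef) (hu : L *ᵥ u = 0) (hu₀ : u ≠ 0)
    {x : ι → ℝ} (hx : x ⬝ᵥ u = 0) {k₀ : ι} (hk₀ : hL.1.eigenvalues k₀ < muK 2 L) :
    hL.1.eigenvectorBasis k₀ ⬝ᵥ x = 0 := by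
  set b := hL.1.eigenvectorBasis
  have hd : ∀ k, k ≠ k₀ → b k ⬝ᵥ u = 0 := fun k hk => by
    have hpos : 0 < hL.1.eigenvalues k :=
      (hL.eigenvalues_nonneg k₀).trans_lt (hk₀.trans_le (hL.1.muK_two_le_eigenvalues_of_ne hk₀ hk))
    have := hL.1.eigenvectorBasis_dotProduct_mulVec k u
    rw [hu, dotProduct_zero] at this
    exact (mul_eq_zero.1 this.symm).resolve_left hpos.ne'
  have hsingle : ∀ y, ∑ k, (b k ⬝ᵥ y) * (b k ⬝ᵥ u) = (b k₀ ⬝ᵥ y) * (b k₀ ⬝ᵥ u) := fun y =>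
    sum_eq_single k₀ (fun k _ hk => by rw [hd k hk, mul_zero]) (by simp)
  have hu₀' : b k₀ ⬝ᵥ u ≠ 0 := by
    intro h
    have := hL.1.dotProduct_eq_sum_eigenvectorBasis u u
    rw [hsingle, h, mul_zero, dotProduct_self_eq_zero] at this
    exact hu₀ this
  have := hL.1.dotProduct_eq_sum_eigenvectorBasis x u
  rw [hsingle, hx] at this
  exact (mul_eq_zero.1 this.symm).resolve_right hu₀'

lemma muK_two_mul_dotProduct_self_le (hL : L.PosSemidef) (hu : L *ᵥ u = 0) (hu₀ : u ≠ 0)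
    {x : ι → ℝ} (hx : x ⬝ᵥ u = 0) :
    muK 2 L * (x ⬝ᵥ x) ≤ x ⬝ᵥ L *ᵥ x := by
  rw [hL.1.dotProduct_mulVec_eq_sum_eigenvalues, hL.1.dotProduct_eq_sum_eigenvectorBasis,
    mul_sum]
  refine sum_le_sum fun k _ => ?_
  rcases lt_or_ge (hL.1.eigenvalues k) (muK 2 L) with hk | hk
  · simp [hL.eigenvectorBasis_dotProduct_eq_zero hu hu₀ hx hk]
  · exact mul_le_mul_of_nonneg_right hk (mul_self_nonneg _)

end Matrix.PosSemidef

lemma lap_mulVec_one (B : Matrix ι ι ℝ) : lap B *ᵥ 1 = 0 := by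
  funext i
  rw [lap, sub_mulVec, Pi.sub_apply, mulVec_diagonal]
  simp [deg, mulVec, dotProduct]

lemma lap_isSymm {B : Matrix ι ι ℝ} (hB : B.IsSymm) : (lap B).IsSymm :=
  (isSymm_diagonal _).sub hB

lemma dotProduct_lap_mulVec (B : Matrix ι ι ℝ) (x : ι → ℝ) :
    x ⬝ᵥ lap B *ᵥ x = ∑ i, deg B i * x i ^ 2 - x ⬝ᵥ B *ᵥ x := by
  rw [lap, sub_mulVec, dotProduct_sub]
  congr 1
  simp only [dotProduct, mulVec_diagonal]
  exact sum_congr rfl fun i _ => by ring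

lemma two_mul_dotProduct_lap_mulVec {B : Matrix ι ι ℝ} (hB : B.IsSymm) (x : ι → ℝ) :
    2 * (x ⬝ᵥ lap B *ᵥ x) = ∑ i, ∑ j, B i j * (x i - x j) ^ 2 := by
  have hdeg : ∑ i, ∑ j, B i j * x i ^ 2 = ∑ i, deg B i * x i ^ 2 :=
    sum_congr rfl fun i _ => by rw [deg, sum_mul]
  have hdeg' : ∑ i, ∑ j, B i j * x j ^ 2 = ∑ i, deg B i * x i ^ 2 := by
    rw [sum_comm, ← hdeg]
    exact sum_congr rfl fun i _ => sum_congr rfl fun j _ => by rw [hB.apply]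
  have hcross : ∑ i, ∑ j, 2 * (x i * (B i j * x j)) = 2 * (x ⬝ᵥ B *ᵥ x) := by
    simp only [dotProduct, mulVec, mul_sum]
  have hexpand : ∀ i j, B i j * (x i - x j) ^ 2 =
      B i j * x i ^ 2 + B i j * x j ^ 2 - 2 * (x i * (B i j * x j)) := fun i j => by ring
  simp only [hexpand, sum_add_distrib, sum_sub_distrib]
  rw [hdeg, hdeg', hcross, dotProduct_lap_mulVec]
  ring

lemma lap_posSemidef {B : Matrix ι ι ℝ} (hB : B.IsSymm) (hB₀ : ∀ i j, 0 ≤ B i j) :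
    (lap B).PosSemidef := by
  refine .of_dotProduct_mulVec_nonneg (isHermitian_iff_isSymm.2 (lap_isSymm hB)) fun x => ?_
  have hsos := two_mul_dotProduct_lap_mulVec hB x
  have hnonneg : 0 ≤ ∑ i, ∑ j, B i j * (x i - x j) ^ 2 :=
    sum_nonneg fun i _ => sum_nonneg fun j _ => mul_nonneg (hB₀ i j) (sq_nonneg _)
  rw [star_trivial]
  linarith

/-- The centred vector `w - mean w • 1` is orthogonal to `1 ∈ ker (lap B)` and has the same
Laplacian quadratic form as `w`. -/
lemma algConn_mul_le_card_mul_dotProduct_lap_mulVec {B : Matrix ι ι ℝ} (hB : B.IsSymm)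
    (hB₀ : ∀ i j, 0 ≤ B i j) (w : ι → ℝ) :
    algConn B * (Fintype.card ι * ∑ i, w i ^ 2 - (∑ i, w i) ^ 2) ≤
      Fintype.card ι * (w ⬝ᵥ lap B *ᵥ w) := by
  rcases isEmpty_or_nonempty ι with _ | _
  · simp
  set t := w - ((∑ i, w i) / Fintype.card ι) • (1 : ι → ℝ)
  have ht : t ⬝ᵥ 1 = 0 := by
    have hn : (Fintype.card ι : ℝ) ≠ 0 := by positivity
    simp [t, dotProduct_one, sum_const, mul_div_cancel₀ _ hn]
  have hfiedler := (lap_posSemidef hB hB₀).muK_two_mul_dotProduct_self_le (lap_mulVec_one B)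
    one_ne_zero ht
  rw [← card_mul_dotProduct_self_sub_mean, ← (lap_isSymm hB).dotProduct_mulVec_sub_smul
    (lap_mulVec_one B) w]
  calc algConn B * (Fintype.card ι * (t ⬝ᵥ t))
      = Fintype.card ι * (muK 2 (lap B) * (t ⬝ᵥ t)) := by rw [algConn]; ring
    _ ≤ Fintype.card ι * (t ⬝ᵥ lap B *ᵥ t) := by gcongr

lemma sq_sum_sub_le_of_algConn_pos {A : Matrix ι ι ℝ} (hA : IsAdj A) (hφ : 0 < algConn A)
    (w : ι → ℝ) :
    (∑ i, w i) ^ 2 - (Fintype.card ι / algConn A) * (w ⬝ᵥ A *ᵥ w) ≤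
      ((algConn A - (Fintype.card ι - algConn (graphCompl A))) / algConn A) * (∑ i, w i) ^ 2 +
        (Fintype.card ι * (maxDeg (graphCompl A) - algConn (graphCompl A)) / algConn A) *
          ∑ i, w i ^ 2 := by
  have hA₁ : ∀ i j, A i j ≤ 1 := fun i j => by rcases hA.2 i j with h | h <;> simp [h]
  have hcompl := algConn_mul_le_card_mul_dotProduct_lap_mulVec (graphCompl_isSymm hA.1)
    (fun i j => sub_nonneg.2 (hA₁ i j)) w
  rw [dotProduct_lap_mulVec, dotProduct_graphCompl_mulVec] at hcompl
  have hdeg := mul_le_mul_of_nonneg_left (sum_deg_mul_sq_le_maxDeg_mul (graphCompl A) w)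
    (Nat.cast_nonneg (Fintype.card ι) : (0 : ℝ) ≤ Fintype.card ι)
  have hkey : 0 ≤ Fintype.card ι * (w ⬝ᵥ A *ᵥ w) +
      Fintype.card ι * (maxDeg (graphCompl A) - algConn (graphCompl A)) * ∑ i, w i ^ 2 -
        (Fintype.card ι - algConn (graphCompl A)) * (∑ i, w i) ^ 2 := by
    linarith
  refine sub_nonneg.1 ((div_nonneg hkey hφ.le).trans_eq ?_)
  field_simp
  ring

/-- Hadamard-product quadratic form upper bound via the complement graph:
`(yᵀv)² − (n/φ(G))·(y∘v)ᵀ A_G (y∘v)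
  ≤ ((φ(G) − (n − φ(Ḡ)))/φ(G))·(yᵀv)² + (n(Δmax(Ḡ) − φ(Ḡ))/φ(G))·‖y∘v‖₂²`. -/
theorem hadamard_quadratic_form_upper_bound
    (n : ℕ) (A : Matrix (Fin n) (Fin n) ℝ) (hA : IsAdj A) (hφ : 0 < algConn A) :
    ∀ y v : Fin n → ℝ,
      (∑ i, y i * v i) ^ 2 -
          ((n : ℝ) / algConn A) *
            ((fun i => y i * v i) ⬝ᵥ A.mulVec (fun i => y i * v i)) ≤
        ((algConn A - ((n : ℝ) - algConn (graphCompl A))) / algConn A) *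
            (∑ i, y i * v i) ^ 2 +
          ((n : ℝ) * (maxDeg (graphCompl A) - algConn (graphCompl A)) / algConn A) *
            (∑ i, (y i * v i) ^ 2) := by
  intro y v
  have := sq_sum_sub_le_of_algConn_pos hA hφ fun i => y i * v i
  rwa [Fintype.card_fin] at this
end
end
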